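/- arXiv:math/0503697 — 2 statements merged into one kernel-verified Lean document; each statement's English description precedes it below -/
import Mathlib

section
/- Let S be a commutative domain with fraction field Q, let M ⊆ S^n be an S-submodule, and let f : S^n × S^n → S be an S-bilinear form with Q-bilinear extension f_Q on Q^n. Assume: (1) M spans Q^n over Q; (2) there exist elements B_1, …, B_n and C_1, …, C_n of M forming Q-bases of Q^n with f(B_i, C_j) = δ_{ij}; (3) β_1, …, β_p generate M as an S-module. Then for α ∈ S^n, one has α ∈ M if and only if f_Q(α, β_i) ∈ S for all i = 1, …, p. -/
/-!
Expanding `α` in the basis `B` over `Q`, duality with `C` shows that the `j`-th coordinate is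
`f_Q(α, C_j)`. The integrality condition on the generators `β_i` propagates by linearity to all of
`M`, in particular to the `C_j`, so `α` is an `S`-combination of the `B_j`, which lie in `M`.
-/

open Submodule

namespace Module.Basis

variable {ι R V : Type*} [CommRing R] [AddCommGroup V] [Module R V]

theorem repr_apply_eq_pairing_of_dual [DecidableEq ι] (b : Basis ι R V)
    (g : V →ₗ[R] V →ₗ[R] R) (c : ι → V)
    (hdual : ∀ i j, g (b i) (c j) = if i = j then 1 else 0) (x : V) (j : ι) :
    b.repr x j = g x (c j) := by
  have hcoord : b.coord j = g.flip (c j) :=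
    b.ext fun i => by simp [hdual, Finsupp.single_apply, eq_comm]
  exact LinearMap.congr_fun hcoord x

theorem mem_span_of_repr_mem_one [Fintype ι] {K N : Type*} [CommRing K] [Algebra R K]
    [AddCommGroup N] [Module R N] [Module K V] [IsScalarTower R K V]
    (b : Basis ι K V) (φ : N →ₗ[R] V) (hφ : Function.Injective φ) (B : ι → N)
    (hb : ∀ i, b i = φ (B i))
    (a : N) (ha : ∀ i, b.repr (φ a) i ∈ (1 : Submodule R K)) : a ∈ span R (Set.range B) := by
  choose s hs using fun i => mem_one.mp (ha i)
  have hφa : φ a = φ (∑ i, s i • B i) := by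
    conv_lhs => rw [← b.sum_repr (φ a)]
    simp only [map_sum, map_smul, ← hs, hb, algebraMap_smul]
  rw [hφ hφa]
  exact sum_mem fun i _ => smul_mem _ _ (subset_span ⟨i, rfl⟩)

end Module.Basis

theorem mem_lattice_iff_pairing_integral_general
    (S : Type*) [CommRing S]
    (Q : Type*) [Field Q] [Algebra S Q] [IsFractionRing S Q]
    (n p : ℕ)
    (M : Submodule S (Fin n → S))
    (f : (Fin n → S) →ₗ[S] (Fin n → S) →ₗ[S] S)
    (fQ : (Fin n → Q) →ₗ[Q] (Fin n → Q) →ₗ[Q] Q)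
    (hcompat : ∀ v w : Fin n → S,
      fQ (fun t => algebraMap S Q (v t)) (fun t => algebraMap S Q (w t)) =
        algebraMap S Q (f v w))
    -- (2) dual bases B, C inside M
    (B C : Fin n → (Fin n → S))
    (hBM : ∀ i, B i ∈ M) (hCM : ∀ i, C i ∈ M)
    (hBbasis : LinearIndependent Q (fun i => fun t => algebraMap S Q (B i t)) ∧
      Submodule.span Q (Set.range (fun i => fun t => algebraMap S Q (B i t))) = ⊤)
    (hdual : ∀ i j, f (B i) (C j) = if i = j then (1 : S) else 0)
    -- (3) generators of M
    (β : Fin p → (Fin n → S))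
    (hgen : M = Submodule.span S (Set.range β))
    (α : Fin n → S) :
    α ∈ M ↔ ∀ i : Fin p, ∃ s : S,
      fQ (fun t => algebraMap S Q (α t)) (fun t => algebraMap S Q (β i t)) =
        algebraMap S Q s := by
  let φ := LinearMap.compLeft (Algebra.linearMap S Q) (Fin n)
  refine ⟨fun _ i => ⟨f α (β i), hcompat α (β i)⟩, fun hβ => ?_⟩
  let ℓ := (fQ (φ α)).restrictScalars S ∘ₗ φ
  have hM_integral : M ≤ comap ℓ 1 := hgen ▸ span_le.mpr (Set.range_subset_iff.mpr fun i =>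
    mem_one.mpr ((hβ i).imp fun _ => Eq.symm))
  let b := Module.Basis.mk hBbasis.1 hBbasis.2.ge
  have hb (i : Fin n) : b i = φ (B i) := Module.Basis.mk_apply _ _ i
  have hdualQ (i j : Fin n) : fQ (b i) (φ (C j)) = if i = j then 1 else 0 := by
    rw [hb]
    exact (hcompat (B i) (C j)).trans (by rw [hdual]; split_ifs <;> simp)
  refine span_le.mpr (Set.range_subset_iff.mpr hBM) <|
    b.mem_span_of_repr_mem_one φ (IsFractionRing.injective S Q).comp_left B hb α fun j => ?_
  rw [b.repr_apply_eq_pairing_of_dual fQ _ hdualQ]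
  exact hM_integral (hCM j)

/-- Membership in a lattice detected by a perfect-pairing-type criterion:
`α ∈ M` iff the pairing of `α` with each generator of `M` lands in `S`. -/
theorem mem_lattice_iff_pairing_integral
    (S : Type*) [CommRing S] [IsDomain S]
    (Q : Type*) [Field Q] [Algebra S Q] [IsFractionRing S Q]
    (n p : ℕ)
    (M : Submodule S (Fin n → S))
    (f : (Fin n → S) →ₗ[S] (Fin n → S) →ₗ[S] S)
    (fQ : (Fin n → Q) →ₗ[Q] (Fin n → Q) →ₗ[Q] Q)
    (hcompat : ∀ v w : Fin n → S,
      fQ (fun t => algebraMap S Q (v t)) (fun t => algebraMap S Q (w t)) =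
        algebraMap S Q (f v w))
    -- (1) M spans Q^n over Q
    (hspan : Submodule.span Q
      {x : Fin n → Q | ∃ v ∈ M, x = fun t => algebraMap S Q (v t)} = ⊤)
    -- (2) dual bases B, C inside M
    (B C : Fin n → (Fin n → S))
    (hBM : ∀ i, B i ∈ M) (hCM : ∀ i, C i ∈ M)
    (hBbasis : LinearIndependent Q (fun i => fun t => algebraMap S Q (B i t)) ∧
      Submodule.span Q (Set.range (fun i => fun t => algebraMap S Q (B i t))) = ⊤)
    (hCbasis : LinearIndependent Q (fun i => fun t => algebraMap S Q (C i t)) ∧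
      Submodule.span Q (Set.range (fun i => fun t => algebraMap S Q (C i t))) = ⊤)
    (hdual : ∀ i j, f (B i) (C j) = if i = j then (1 : S) else 0)
    -- (3) generators of M
    (β : Fin p → (Fin n → S))
    (hgen : M = Submodule.span S (Set.range β))
    (α : Fin n → S) :
    α ∈ M ↔ ∀ i : Fin p, ∃ s : S,
      fQ (fun t => algebraMap S Q (α t)) (fun t => algebraMap S Q (β i t)) =
        algebraMap S Q s :=
  mem_lattice_iff_pairing_integral_general S Q n p M f fQ hcompat B C hBM hCM hBbasis hdual β hgen α
end

section
/- With the notation of the previous statement, suppose moreover that k[x,y]/I is finite dimensional over k. Then P_l = 1 for all sufficiently large l, and the sequence D_l = deg(P_l), l = 0, 1, 2, …, is a partition (weakly decreasing, eventually zero) whose sum Σ_l D_l equals dim_k k[x,y]/I. -/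
open Polynomial

/-- `π` is a partition of `n`: weakly decreasing, eventually zero, with sum `n`. -/
def IsPartitionOf (n : ℕ) (π : ℕ → ℕ) : Prop :=
  (∀ a, π (a + 1) ≤ π a) ∧
    ∃ N, (∀ a, N ≤ a → π a = 0) ∧ ∑ a ∈ Finset.range N, π a = n

/-!
Here `k[x,y] = (k[x])[y]`, so the outer variable `X` is `y` and `C Q * X ^ l` is `y^l Q`.

Finite dimensionality makes `y` integral over `k` modulo `I`; by homogeneity the leading term of
a monic equation for it gives `y^d ∈ I`, hence `J_l = (1)` for `l ≥ d`. Multiplying by `y` gives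
`J_l ⊆ J_{l+1}`, i.e. `P_{l+1} ∣ P_l`. Finally `f ↦ (f_l mod J_l)_{l<d}` has kernel `I` (by
homogeneity and `y^d ∈ I`) and is onto, so `k[x,y]/I ≅ ∏_{l<d} k[x]/(P_l)`, of dimension
`∑ deg P_l`.
-/

section

variable {R : Type*} [CommRing R] {I : Ideal R[X]}

theorem Ideal.mem_of_forall_C_mul_X_pow_mem {f : R[X]} (h : ∀ l, C (f.coeff l) * X ^ l ∈ I) :
    f ∈ I :=
  f.as_sum_range_C_mul_X_pow ▸ I.sum_mem fun l _ ↦ h l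

theorem Ideal.C_mul_X_pow_mem_of_X_pow_mem {d l : ℕ} (hd : X ^ d ∈ I) (hl : d ≤ l) (c : R) :
    C c * X ^ l ∈ I := by
  rw [← Nat.sub_add_cancel hl, pow_add, ← mul_assoc]
  exact I.mul_mem_left _ hd

variable (hhom : ∀ f ∈ I, ∀ l : ℕ, C (f.coeff l) * X ^ l ∈ I)

include hhom in
theorem exists_X_pow_mem_of_finiteDimensional (k : Type*) [Field k] [Algebra k R]
    [FiniteDimensional k (R[X] ⧸ I)] : ∃ d, X ^ d ∈ I := by
  obtain ⟨p, hmonic, hp⟩ := IsIntegral.of_finite k (Ideal.Quotient.mk I X)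
  have hpX : aeval (X : R[X]) p ∈ I := by
    rw [← Ideal.Quotient.eq_zero_iff_mem, ← Ideal.Quotient.mkₐ_eq_mk k, ← aeval_algHom_apply]
    exact hp
  have hmap : aeval (X : R[X]) p = p.map (algebraMap k R) := by
    rw [aeval_def, IsScalarTower.algebraMap_eq k R R[X], ← eval₂_map, algebraMap_eq, eval₂_C_X]
  refine ⟨p.natDegree, ?_⟩
  simpa [hmap, hmonic.coeff_natDegree] using hhom _ hpX p.natDegree

variable {J : ℕ → Ideal R} (hJ : ∀ l Q, Q ∈ J l ↔ C Q * X ^ l ∈ I)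

include hJ in
theorem monotone_of_mem_iff_C_mul_X_pow_mem : Monotone J :=
  monotone_nat_of_le_succ fun l Q hQ ↦ by
    rw [hJ, pow_succ', mul_left_comm]
    exact I.mul_mem_left _ ((hJ l Q).1 hQ)

include hJ in
theorem eq_top_of_X_pow_mem {d l : ℕ} (hd : X ^ d ∈ I) (hl : d ≤ l) : J l = ⊤ :=
  (Ideal.eq_top_iff_one _).2 <|
    (hJ l 1).2 (by simpa using Ideal.C_mul_X_pow_mem_of_X_pow_mem hd hl 1)

noncomputable def coeffQuotients (J : ℕ → Ideal R) (d : ℕ) : R[X] →ₗ[R] Π l : Fin d, R ⧸ J l :=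
  LinearMap.pi fun l ↦ (J l).mkQ ∘ₗ lcoeff R l

theorem coeffQuotients_monomial (d : ℕ) (l : Fin d) (q : R) :
    coeffQuotients J d (monomial l q) = Pi.single l (Ideal.Quotient.mk (J l) q) := by
  ext j
  by_cases h : j = l
  · subst h; simp [coeffQuotients]
  · simp [coeffQuotients, h, Ne.symm h, coeff_monomial, Fin.val_eq_val]

theorem coeffQuotients_surjective (d : ℕ) : Function.Surjective (coeffQuotients J d) := by
  intro v
  choose q hq using fun l ↦ Ideal.Quotient.mk_surjective (v l)
  refine ⟨∑ l : Fin d, monomial l (q l), ?_⟩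
  simp only [map_sum, coeffQuotients_monomial, hq, Finset.univ_sum_single]

include hhom hJ in
theorem ker_coeffQuotients {d : ℕ} (hd : X ^ d ∈ I) :
    LinearMap.ker (coeffQuotients J d) = I.restrictScalars R := by
  ext f
  simp only [LinearMap.mem_ker, Submodule.restrictScalars_mem, funext_iff, coeffQuotients,
    LinearMap.pi_apply, LinearMap.comp_apply, Submodule.mkQ_apply, lcoeff_apply, Pi.zero_apply,
    Ideal.Quotient.mk_eq_mk, Ideal.Quotient.eq_zero_iff_mem, hJ]
  refine ⟨fun h ↦ Ideal.mem_of_forall_C_mul_X_pow_mem fun l ↦ ?_, fun hf l ↦ hhom f hf l⟩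
  rcases lt_or_ge l d with hl | hl
  exacts [h ⟨l, hl⟩, Ideal.C_mul_X_pow_mem_of_X_pow_mem hd hl _]

noncomputable def quotientEquivPiQuotient {d : ℕ} (hd : X ^ d ∈ I) :
    (R[X] ⧸ I) ≃ₗ[R] Π l : Fin d, R ⧸ J l :=
  (Submodule.Quotient.restrictScalarsEquiv R I).symm ≪≫ₗ
    Submodule.quotEquivOfEq _ _ (ker_coeffQuotients hhom hJ hd).symm ≪≫ₗ
    (coeffQuotients J d).quotKerEquivOfSurjective (coeffQuotients_surjective d)

include hhom hJ in
theorem finrank_quotient_eq_sum_finrank (k : Type*) [Field k] [Algebra k R] {d : ℕ}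
    (hd : X ^ d ∈ I) [FiniteDimensional k (R[X] ⧸ I)] :
    Module.finrank k (R[X] ⧸ I) = ∑ l ∈ Finset.range d, Module.finrank k (R ⧸ J l) := by
  let e := (quotientEquivPiQuotient hhom hJ hd).restrictScalars k
  have : Module.Finite k (Π l : Fin d, R ⧸ J l) := Module.Finite.equiv e
  have (l : Fin d) : Module.Finite k (R ⧸ J l) :=
    Module.Finite.of_surjective (LinearMap.proj (R := k) (φ := fun l : Fin d ↦ R ⧸ J l) l)
      (Function.surjective_eval l)
  rw [e.finrank_eq, Module.finrank_pi_fintype, Finset.sum_range]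

end

/-- We model `k[x,y]` as `Polynomial (Polynomial k)`, `y` being the outer
variable.  If `I` is homogeneous for the `y`-grading, `J_l = (P_l)` with `P_l`
monic, and `k[x,y]/I` is finite dimensional, then `P_l = 1` for `l` large and
the degrees `D_l = deg P_l` form a partition of `dim_k k[x,y]/I`. -/
theorem degrees_form_partition
    (k : Type*) [Field k]
    (I : Ideal (Polynomial (Polynomial k)))
    (hhom : ∀ f ∈ I, ∀ l : ℕ, (C (f.coeff l)) * X ^ l ∈ I)
    (P : ℕ → Polynomial k)
    (hmonic : ∀ l, (P l).Monic)
    (hgen : ∀ l : ℕ, ∀ Q : Polynomial k,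
      Q ∈ Ideal.span ({P l} : Set (Polynomial k)) ↔ C Q * X ^ l ∈ I)
    (hfin : FiniteDimensional k (Polynomial (Polynomial k) ⧸ I)) :
    (∃ N, ∀ l, N ≤ l → P l = 1) ∧
      IsPartitionOf (Module.finrank k (Polynomial (Polynomial k) ⧸ I))
        (fun l => (P l).natDegree) := by
  obtain ⟨d, hd⟩ := exists_X_pow_mem_of_finiteDimensional hhom k
  have hone (l : ℕ) (hl : d ≤ l) : P l = 1 :=
    (hmonic l).eq_one_of_isUnit <| Ideal.span_singleton_eq_top.1 (eq_top_of_X_pow_mem hgen hd hl)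
  have hdvd (l : ℕ) : P (l + 1) ∣ P l :=
    Ideal.span_singleton_le_span_singleton.1
      (monotone_of_mem_iff_C_mul_X_pow_mem hgen l.le_succ)
  refine ⟨⟨d, hone⟩, fun l ↦ natDegree_le_of_dvd (hdvd l) (hmonic l).ne_zero,
    d, fun l hl ↦ by simp [hone l hl], ?_⟩
  simp only [finrank_quotient_eq_sum_finrank hhom hgen k hd, finrank_quotient_span_eq_natDegree]
end
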